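/- For all integers d ≥ 2 and q₁,…,q_d ≥ 2, the Diestel–Leader graph DL(q₁,…,q_d) is vertex-transitive: for any two vertices x and y there exists a graph automorphism g of DL(q₁,…,q_d) with g(x) = y. -/

import Mathlib

/-- A vertex of the homogeneous tree `T_q` with a fixed end: a pair `(f, n)` with
`f : ℤ → ℤ/qℤ` finitely supported and `f k = 0` for `k ≥ n`. -/
structure TreeVert (q : ℕ) where
  f : ℤ → ZMod q
  lvl : ℤ
  finsupp : {k : ℤ | f k ≠ 0}.Finite
  eventually_zero : ∀ k, lvl ≤ k → f k = 0

/-- Adjacency in the tree `T_q`. -/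
def treeAdj (q : ℕ) (u v : TreeVert q) : Prop :=
  (v.lvl = u.lvl + 1 ∧ ∀ k < u.lvl, u.f k = v.f k) ∨
  (u.lvl = v.lvl + 1 ∧ ∀ k < v.lvl, v.f k = u.f k)

/-- The homogeneous tree `T_q` with a fixed end, as a simple graph. -/
def treeGraph (q : ℕ) : SimpleGraph (TreeVert q) where
  Adj := treeAdj q
  symm := ⟨fun _ _ h => Or.symm h⟩
  loopless := by
    refine ⟨?_⟩
    rintro u (⟨h, _⟩ | ⟨h, _⟩) <;> omega

/-- Vertices of the Diestel-Leader graph `DL(q₁,…,q_d)`. -/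
def DLVert (d : ℕ) (q : Fin d → ℕ) : Type :=
  { x : (j : Fin d) → TreeVert (q j) // ∑ j, (x j).lvl = 0 }

/-- Adjacency in the Diestel-Leader graph. -/
def DLAdj (d : ℕ) (q : Fin d → ℕ) (x y : DLVert d q) : Prop :=
  ∃ i j : Fin d, i ≠ j ∧ treeAdj (q i) (x.1 i) (y.1 i) ∧ treeAdj (q j) (x.1 j) (y.1 j) ∧
    ∀ k, k ≠ i → k ≠ j → x.1 k = y.1 k

/-- The Diestel-Leader graph `DL(q₁,…,q_d)`. -/
def DLGraph (d : ℕ) (q : Fin d → ℕ) : SimpleGraph (DLVert d q) where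
  Adj := DLAdj d q
  symm := by
    refine ⟨?_⟩
    rintro x y ⟨i, j, hij, hi, hj, hk⟩
    exact ⟨i, j, hij, Or.symm hi, Or.symm hj, fun k h1 h2 => (hk k h1 h2).symm⟩
  loopless := by
    refine ⟨?_⟩
    rintro x ⟨i, j, hij, hi, _, _⟩
    rcases hi with ⟨h, _⟩ | ⟨h, _⟩ <;> omega

/-!
Each tree `T_q` carries two kinds of automorphisms: the level shift `(f, n) ↦ (f(· - t), n + t)`
and the digit translation `(f, n) ↦ ((f + c)·𝟙_{k < n}, n)` by a finitely supported `c`.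
Composing them moves any vertex `u` to any vertex `v` while shifting every level by
`h(v) - h(u)`. Applying such automorphisms coordinatewise preserves adjacency in
`DL(q₁,…,q_d)`, and it preserves the constraint `∑ h(x_j) = 0` because the level shifts
`h(y_j) - h(x_j)` sum to zero.
-/

@[simp]
theorem treeGraph_adj (q : ℕ) : (treeGraph q).Adj = treeAdj q := rfl

namespace TreeVert

variable {q : ℕ}

theorem ext {u v : TreeVert q} (hf : u.f = v.f) (hl : u.lvl = v.lvl) : u = v := by
  cases u; cases v; simp_all

theorem hasFiniteSupport (w : TreeVert q) : w.f.HasFiniteSupport := w.finsupp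

def shift (t : ℤ) (w : TreeVert q) : TreeVert q where
  f k := w.f (k - t)
  lvl := w.lvl + t
  finsupp := w.hasFiniteSupport.fun_comp_of_injective sub_left_injective
  eventually_zero k hk := w.eventually_zero _ (by omega)

@[simp]
theorem shift_shift (s t : ℤ) (w : TreeVert q) : shift s (shift t w) = shift (t + s) w :=
  ext (funext fun k => by simp only [shift, sub_sub, add_comm s t]) (add_assoc _ _ _)

@[simp]
theorem shift_zero (w : TreeVert q) : shift 0 w = w :=
  ext (funext fun k => by simp only [shift, sub_zero]) (add_zero _)

theorem treeAdj_shift (t : ℤ) {u v : TreeVert q} (h : treeAdj q u v) :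
    treeAdj q (shift t u) (shift t v) := by
  rcases h with ⟨hl, hf⟩ | ⟨hl, hf⟩
  · exact Or.inl ⟨by simp only [shift]; omega,
      fun k (hk : k < u.lvl + t) => hf (k - t) (by omega)⟩
  · exact Or.inr ⟨by simp only [shift]; omega,
      fun k (hk : k < v.lvl + t) => hf (k - t) (by omega)⟩

def shiftIso (t : ℤ) : treeGraph q ≃g treeGraph q where
  toFun := shift t
  invFun := shift (-t)
  left_inv w := by simp
  right_inv w := by simp
  map_rel_iff' := ⟨fun h => by simpa using treeAdj_shift (-t) h, treeAdj_shift t⟩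

def addDigits (c : ℤ → ZMod q) (hc : c.HasFiniteSupport) (w : TreeVert q) : TreeVert q where
  f k := if k < w.lvl then w.f k + c k else 0
  lvl := w.lvl
  finsupp := (w.hasFiniteSupport.add hc).subset fun k hk => by
    by_contra h
    simp_all
  eventually_zero k hk := if_neg (not_lt.mpr hk)

@[simp]
theorem addDigits_addDigits (c c' : ℤ → ZMod q) (hc : c.HasFiniteSupport)
    (hc' : c'.HasFiniteSupport) (w : TreeVert q) :
    addDigits c hc (addDigits c' hc' w) = addDigits (c' + c) (hc'.add hc) w := by
  refine ext (funext fun k => ?_) rfl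
  by_cases hk : k < w.lvl <;> simp [addDigits, hk, add_assoc]

@[simp]
theorem addDigits_zero (w : TreeVert q) : addDigits 0 Function.hasFiniteSupport_zero w = w := by
  refine ext (funext fun k => ?_) rfl
  by_cases hk : k < w.lvl
  · simp [addDigits, hk]
  · simp [addDigits, hk, w.eventually_zero k (not_lt.mp hk)]

theorem addDigits_sub_of_lvl_eq {u v : TreeVert q} (h : u.lvl = v.lvl) :
    addDigits (v.f - u.f) (v.hasFiniteSupport.sub u.hasFiniteSupport) u = v := by
  refine ext (funext fun k => ?_) h
  by_cases hk : k < u.lvl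
  · simp [addDigits, hk]
  · simp [addDigits, hk, v.eventually_zero k (by omega)]

theorem treeAdj_addDigits (c : ℤ → ZMod q) (hc : c.HasFiniteSupport) {u v : TreeVert q}
    (h : treeAdj q u v) : treeAdj q (addDigits c hc u) (addDigits c hc v) := by
  rcases h with ⟨hl, hf⟩ | ⟨hl, hf⟩
  · refine Or.inl ⟨hl, fun k (hk : k < u.lvl) => ?_⟩
    simp [addDigits, hk, show k < v.lvl by omega, hf k hk]
  · refine Or.inr ⟨hl, fun k (hk : k < v.lvl) => ?_⟩
    simp [addDigits, hk, show k < u.lvl by omega, hf k hk]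

def addDigitsIso (c : ℤ → ZMod q) (hc : c.HasFiniteSupport) : treeGraph q ≃g treeGraph q where
  toFun := addDigits c hc
  invFun := addDigits (-c) hc.neg
  left_inv w := by simp
  right_inv w := by simp
  map_rel_iff' := ⟨fun h => by simpa using treeAdj_addDigits (-c) hc.neg h,
    treeAdj_addDigits c hc⟩

theorem exists_iso_apply_eq (u v : TreeVert q) :
    ∃ φ : treeGraph q ≃g treeGraph q, φ u = v ∧ ∀ w, (φ w).lvl = w.lvl + (v.lvl - u.lvl) := by
  set u' := shift (v.lvl - u.lvl) u
  have hu' : u'.lvl = v.lvl := by simp only [u', shift]; omega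
  refine ⟨(shiftIso (v.lvl - u.lvl)).trans
    (addDigitsIso (v.f - u'.f) (v.hasFiniteSupport.sub u'.hasFiniteSupport)),
    addDigits_sub_of_lvl_eq hu', fun w => rfl⟩

end TreeVert

namespace DLGraph

variable {d : ℕ} {q : Fin d → ℕ}

def mapTrees (φ : ∀ j, TreeVert (q j) → TreeVert (q j)) (t : Fin d → ℤ)
    (hφ : ∀ j w, (φ j w).lvl = w.lvl + t j) (ht : ∑ j, t j = 0) (x : DLVert d q) :
    DLVert d q :=
  ⟨fun j => φ j (x.1 j), by simp only [hφ, Finset.sum_add_distrib, x.2, ht, add_zero]⟩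

def isoOfTreeIsos (φ : ∀ j, treeGraph (q j) ≃g treeGraph (q j)) (t : Fin d → ℤ)
    (hφ : ∀ j w, (φ j w).lvl = w.lvl + t j) (ht : ∑ j, t j = 0) :
    DLGraph d q ≃g DLGraph d q where
  toFun := mapTrees (fun j => φ j) t hφ ht
  invFun := mapTrees (fun j => (φ j).symm) (-t)
    (fun j w => by
      rw [Pi.neg_apply, ← sub_eq_add_neg, eq_sub_iff_add_eq, ← hφ, RelIso.apply_symm_apply])
    (by simp only [Pi.neg_apply, Finset.sum_neg_distrib, ht, neg_zero])
  left_inv x := Subtype.ext (funext fun j => (φ j).symm_apply_apply _)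
  right_inv x := Subtype.ext (funext fun j => (φ j).apply_symm_apply _)
  map_rel_iff' {x y} := by
    have hadj (j : Fin d) (u v) : treeAdj (q j) (φ j u) (φ j v) ↔ treeAdj (q j) u v :=
      (φ j).map_adj_iff
    change DLAdj d q (mapTrees _ t hφ ht x) (mapTrees _ t hφ ht y) ↔ DLAdj d q x y
    simp only [DLAdj, mapTrees, hadj, EmbeddingLike.apply_eq_iff_eq]

end DLGraph

theorem DLGraph_vertex_transitive (d : ℕ) (q : Fin d → ℕ) :
    ∀ x y : DLVert d q, ∃ g : DLGraph d q ≃g DLGraph d q, g x = y := by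
  intro x y
  choose φ hφx hφlvl using fun j => TreeVert.exists_iso_apply_eq (x.1 j) (y.1 j)
  refine ⟨DLGraph.isoOfTreeIsos φ _ hφlvl ?_, Subtype.ext (funext hφx)⟩
  rw [Finset.sum_sub_distrib, x.2, y.2, sub_zero]
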